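/- For |A| > 1, two closed conditional expressions are provably equal in CP_cr if and only if they have the same reply and apply behavior on all states f : A^cr → {T,F}, where A^cr is the set of nonempty strings over A with no two consecutive equal atoms, and (a • f)(σ) = f(σ) if σ begins with a, and f(aσ) otherwise. -/

import Mathlib

inductive CE (A : Type) : Type
  | tt : CE A
  | ff : CE A
  | atom : A → CE A
  | cond : CE A → CE A → CE A → CE A

inductive Deriv {A : Type} (Ax : CE A → CE A → Prop) : CE A → CE A → Prop
  | ax {t t'} : Ax t t' → Deriv Ax t t'
  | refl (t) : Deriv Ax t t
  | symm {t t'} : Deriv Ax t t' → Deriv Ax t' t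
  | trans {t t' t''} : Deriv Ax t t' → Deriv Ax t' t'' → Deriv Ax t t''
  | congr {x x' y y' z z'} : Deriv Ax x x' → Deriv Ax y y' → Deriv Ax z z' →
      Deriv Ax (.cond x y z) (.cond x' y' z')
  | cp1 (x y) : Deriv Ax (.cond x .tt y) x
  | cp2 (x y) : Deriv Ax (.cond x .ff y) y
  | cp3 (x) : Deriv Ax (.cond .tt x .ff) x
  | cp4 (x y z u v) : Deriv Ax (.cond x (.cond y z u) v) (.cond (.cond x y v) z (.cond x u v))

/-- Derivability from the CP axioms alone (no extra axioms). -/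
def CP {A : Type} : CE A → CE A → Prop := Deriv (fun _ _ => False)

/-- The axiom schemes (CPcr1) and (CPcr2), for each atom a. -/
def AxCr {A : Type} : CE A → CE A → Prop := fun s t =>
  (∃ (a : A) (x y z : CE A),
      s = .cond (.cond x (.atom a) y) (.atom a) z ∧ t = .cond x (.atom a) z) ∨
  (∃ (a : A) (x y z : CE A),
      s = .cond x (.atom a) (.cond y (.atom a) z) ∧ t = .cond x (.atom a) z)

/-- A^cr: nonempty strings over A in which no two consecutive atoms are equal. -/
def CrStr (A : Type) := {l : List A // l ≠ [] ∧ l.Chain' (· ≠ ·)}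

/-- States for contractive congruence: all functions A^cr → {T,F}. -/
def StateC (A : Type) := CrStr A → Bool

/-- Prepending an atom to a string in A^cr, absorbing a repeated first atom. -/
def acons {A : Type} [DecidableEq A] (a : A) (l : CrStr A) : CrStr A :=
  if h : l.1.head? = some a then l
  else ⟨a :: l.1, ⟨List.cons_ne_nil _ _, List.isChain_cons.mpr
    ⟨fun b hb hab => h (by rw [Option.mem_def] at hb; rw [hb, hab]), l.2.2⟩⟩⟩

mutual
/-- The reply  in state . -/
def replyC {A : Type} [DecidableEq A] : CE A → StateC A → Bool
  | .tt, _ => true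
  | .ff, _ => false
  | .atom a, f => f ⟨[a], by simp [List.Chain']⟩
  | .cond x y z, f => if replyC y f then replyC x (applyC y f) else replyC z (applyC y f)

/-- The state transformation : (a • f)(σ) = f(σ) if σ begins with a,
and f(aσ) otherwise. -/
def applyC {A : Type} [DecidableEq A] : CE A → StateC A → StateC A
  | .tt, f => f
  | .ff, f => f
  | .atom a, f => fun l => f (acons a l)
  | .cond x y z, f => if replyC y f then applyC x (applyC y f) else applyC z (applyC y f)
end

/-!
Soundness is a check of each axiom against the semantics; for the two cr-schemes it comes down
to `a • a • f = a • f` and `(a • f)(a) = f(a)`.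

For completeness, every term is CP-equal to a basic form (a decision tree over atoms), and the
cr-schemes then delete every node whose atom repeats its parent's, leaving a contractive basic
form. Along a branch `a₁ ⋯ aₖ` of a contractive form the `i`-th query reads the state at the
string `a₁ ⋯ aᵢ`, and the final state is `σ ↦ f (a₁ ⋯ aₖ ⋆ σ)`, where `⋆` concatenates and
merges a repeated atom at the junction. The queried strings are pairwise distinct, so a state can
be prescribed freely along a branch and arbitrarily elsewhere. Two different contractive forms
are therefore separated at their first point of difference: different leaves by the reply, a leaf
against a node or two nodes with different atoms by the final state. Only a leaf against a node
at the root needs a second atom.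
-/

lemma not_prefix_of_append_singleton_prefix {A : Type} {p s : List A} {a : A}
    (h : p ++ [a] <+: s) : ¬ s <+: p := fun h' => by
  have := h.length_le.trans h'.length_le
  simp at this

namespace CrStr

variable {A : Type}

def single (a : A) : CrStr A := ⟨[a], List.cons_ne_nil a [], List.isChain_singleton a⟩

variable [DecidableEq A]

lemma acons_eq_self {a : A} {σ : CrStr A} (h : σ.1.head? = some a) : acons a σ = σ :=
  dif_pos h

lemma val_acons_of_head?_ne {a : A} {σ : CrStr A} (h : σ.1.head? ≠ some a) :
    (acons a σ).1 = a :: σ.1 :=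
  congrArg Subtype.val (dif_neg h)

lemma head?_acons (a : A) (σ : CrStr A) : (acons a σ).1.head? = some a := by
  by_cases h : σ.1.head? = some a
  · rwa [acons_eq_self h]
  · rw [val_acons_of_head?_ne h, List.head?_cons]

lemma val_foldr_acons {q : List A} (hq : q.IsChain (· ≠ ·)) {σ : CrStr A}
    (hσ : q.getLast? ≠ σ.1.head?) : (q.foldr acons σ).1 = q ++ σ.1 := by
  induction q with
  | nil => rfl
  | cons a q ih =>
    rcases q with _ | ⟨b, q⟩
    · exact val_acons_of_head?_ne (Ne.symm hσ)
    · rw [List.getLast?_cons_cons] at hσ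
      have hab : a ≠ b := (List.isChain_cons_cons.mp hq).1
      have h := ih hq.tail hσ
      rw [List.foldr_cons, val_acons_of_head?_ne (by rw [h]; simpa using hab.symm), h]
      rfl

end CrStr

namespace StateC

variable {A : Type} [DecidableEq A]

/-- The state `a • f`. -/
def act (a : A) (f : StateC A) : StateC A := fun σ => f (acons a σ)

/-- The state `aₖ • ⋯ • a₁ • f` for `q = a₁ ⋯ aₖ`. -/
def actList (q : List A) (f : StateC A) : StateC A := fun σ => f (q.foldr acons σ)

lemma act_act (a : A) (f : StateC A) : act a (act a f) = act a f :=
  funext fun σ => congrArg f (CrStr.acons_eq_self (CrStr.head?_acons a σ))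

lemma act_single (a : A) (f : StateC A) : act a f (.single a) = f (.single a) :=
  congrArg f (CrStr.acons_eq_self rfl)

lemma actList_append_singleton (q : List A) (a : A) (f : StateC A) :
    actList (q ++ [a]) f = act a (actList q f) := by
  funext σ
  simp only [actList, act, List.foldr_append, List.foldr_cons, List.foldr_nil]

lemma actList_single_of_getLast?_ne {p : List A} (hp : p.IsChain (· ≠ ·)) {a : A}
    (ha : p.getLast? ≠ some a) (f : StateC A) :
    ∃ s : CrStr A, s.1 = p ++ [a] ∧ actList p f (.single a) = f s :=
  ⟨_, CrStr.val_foldr_acons hp (σ := .single a) ha, rfl⟩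

def EqOnPrefixes (p : List A) (f g : StateC A) : Prop := ∀ s : CrStr A, s.1 <+: p → f s = g s

def patch (p : List A) (g : StateC A) (h : CrStr A → Bool) : StateC A :=
  fun s => if s.1 <+: p then g s else h s

lemma eqOnPrefixes_patch (p : List A) (g : StateC A) (h : CrStr A → Bool) :
    EqOnPrefixes p (patch p g h) g :=
  fun _ hs => if_pos hs

lemma patch_of_not_prefix {p : List A} {g : StateC A} {h : CrStr A → Bool} {s : CrStr A}
    (hs : ¬ s.1 <+: p) : patch p g h s = h s :=
  if_neg hs

lemma EqOnPrefixes.of_append_patch {p q : List A} {f g : StateC A} {h : CrStr A → Bool}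
    (hf : EqOnPrefixes (p ++ q) f (patch p g h)) : EqOnPrefixes p f g :=
  fun s hs => (hf s (hs.trans (List.prefix_append p q))).trans (if_pos hs)

end StateC

open StateC

section Semantics

variable {A : Type} [DecidableEq A]

def semC (t : CE A) (f : StateC A) : Bool × StateC A := (replyC t f, applyC t f)

@[simp] lemma semC_tt (f : StateC A) : semC .tt f = (true, f) := rfl

@[simp] lemma semC_ff (f : StateC A) : semC .ff f = (false, f) := rfl

@[simp] lemma semC_atom (a : A) (f : StateC A) : semC (.atom a) f = (f (.single a), act a f) :=
  rfl

lemma semC_cond (x y z : CE A) (f : StateC A) :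
    semC (.cond x y z) f =
      if (semC y f).1 then semC x (semC y f).2 else semC z (semC y f).2 := by
  by_cases h : replyC y f <;> simp [semC, replyC, applyC, h]

theorem semC_eq_of_deriv {t t' : CE A} (h : Deriv AxCr t t') : semC t = semC t' := by
  induction h with
  | ax h =>
    funext f
    rcases h with ⟨a, x, y, z, rfl, rfl⟩ | ⟨a, x, y, z, rfl, rfl⟩ <;>
      cases hfa : f (.single a) <;> simp [semC_cond, act_act, act_single, hfa]
  | refl => rfl
  | symm _ ih => exact ih.symm
  | trans _ _ ih ih' => exact ih.trans ih'
  | congr _ _ _ hx hy hz =>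
    funext f
    simp only [semC_cond, hx, hy, hz]
  | cp1 | cp2 =>
    funext f
    simp [semC_cond]
  | cp3 x =>
    funext f
    simp only [semC_cond, semC_tt, semC_ff]
    generalize semC x f = r
    rcases r with ⟨_ | _, g⟩ <;> rfl
  | cp4 =>
    funext f
    simp only [semC_cond]
    split_ifs <;> simp_all

lemma exists_applyC_eq_comp (t : CE A) (g : StateC A) :
    ∃ φ : CrStr A → CrStr A, applyC t g = g ∘ φ := by
  induction t generalizing g with
  | tt | ff => exact ⟨id, rfl⟩
  | atom a => exact ⟨acons a, rfl⟩
  | cond x y z hx hy hz =>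
    obtain ⟨φ, hφ⟩ := hy g
    rw [applyC]
    split
    · obtain ⟨ψ, hψ⟩ := hx (applyC y g)
      exact ⟨φ ∘ ψ, by rw [hψ, hφ]; rfl⟩
    · obtain ⟨ψ, hψ⟩ := hz (applyC y g)
      exact ⟨φ ∘ ψ, by rw [hψ, hφ]; rfl⟩

end Semantics

/-- Basic forms; `node a l r` stands for `l ◁ a ▷ r`. -/
inductive BF (A : Type) : Type
  | tt : BF A
  | ff : BF A
  | node (a : A) (l r : BF A) : BF A

namespace BF

variable {A : Type}

def toCE : BF A → CE A
  | tt => .tt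
  | ff => .ff
  | node a l r => .cond l.toCE (.atom a) r.toCE

def graft : BF A → BF A → BF A → BF A
  | tt, x, _ => x
  | ff, _, z => z
  | node a l r, x, z => node a (l.graft x z) (r.graft x z)

/-- `o` is the atom of the parent of the root, if any; the contractive basic forms are those with
`b.ContrAfter none`. -/
def ContrAfter : BF A → Option A → Prop
  | tt, _ => True
  | ff, _ => True
  | node a l r, o => o ≠ some a ∧ l.ContrAfter (some a) ∧ r.ContrAfter (some a)

variable [DecidableEq A]

def takeL (a : A) : BF A → BF A
  | node c l r => if c = a then takeL a l else node c l r
  | b => b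

def takeR (a : A) : BF A → BF A
  | node c l r => if c = a then takeR a r else node c l r
  | b => b

def contract : BF A → BF A
  | node a l r => node a (l.contract.takeL a) (r.contract.takeR a)
  | b => b

lemma contrAfter_takeL (a : A) {b : BF A} {o : Option A} (hb : b.ContrAfter o) :
    (b.takeL a).ContrAfter (some a) := by
  induction b generalizing o with
  | tt | ff => trivial
  | node c l r ihl _ =>
    rw [takeL]
    split_ifs with hca
    · exact ihl (hca ▸ hb.2.1)
    · exact ⟨by simpa using Ne.symm hca, hb.2⟩

lemma contrAfter_takeR (a : A) {b : BF A} {o : Option A} (hb : b.ContrAfter o) :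
    (b.takeR a).ContrAfter (some a) := by
  induction b generalizing o with
  | tt | ff => trivial
  | node c l r _ ihr =>
    rw [takeR]
    split_ifs with hca
    · exact ihr (hca ▸ hb.2.2)
    · exact ⟨by simpa using Ne.symm hca, hb.2⟩

lemma contrAfter_contract (b : BF A) : b.contract.ContrAfter none := by
  induction b with
  | tt | ff => trivial
  | node a l r ihl ihr =>
    exact ⟨(Option.some_ne_none a).symm, contrAfter_takeL a ihl, contrAfter_takeR a ihr⟩

end BF

def CE.toBF {A : Type} : CE A → BF A
  | .tt => .tt
  | .ff => .ff
  | .atom a => .node a .tt .ff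
  | .cond x y z => y.toBF.graft x.toBF z.toBF

section Normalization

variable {A : Type} {Ax : CE A → CE A → Prop}

lemma deriv_cond_graft {x z : CE A} {bx bz : BF A} (hx : Deriv Ax x bx.toCE)
    (hz : Deriv Ax z bz.toCE) (b : BF A) :
    Deriv Ax (.cond x b.toCE z) (b.graft bx bz).toCE := by
  induction b with
  | tt => exact (Deriv.cp1 x z).trans hx
  | ff => exact (Deriv.cp2 x z).trans hz
  | node a l r ihl ihr =>
    exact (Deriv.cp4 x l.toCE (.atom a) r.toCE z).trans (.congr ihl (.refl _) ihr)

lemma deriv_toBF (t : CE A) : Deriv Ax t t.toBF.toCE := by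
  induction t with
  | tt | ff => exact .refl _
  | atom a => exact (Deriv.cp3 (.atom a)).symm
  | cond x y z hx hy hz =>
    exact (Deriv.congr (.refl x) hy (.refl z)).trans (deriv_cond_graft hx hz _)

variable [DecidableEq A]

lemma deriv_takeL (a : A) (b r : BF A) :
    Deriv AxCr (.node a b r : BF A).toCE (.node a (b.takeL a) r : BF A).toCE := by
  induction b with
  | tt | ff => exact .refl _
  | node c l' r' ihl _ =>
    rw [BF.takeL]
    split_ifs with hca
    · subst hca
      exact (Deriv.ax (Or.inl ⟨c, l'.toCE, r'.toCE, r.toCE, rfl, rfl⟩)).trans ihl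
    · exact .refl _

lemma deriv_takeR (a : A) (b l : BF A) :
    Deriv AxCr (.node a l b : BF A).toCE (.node a l (b.takeR a) : BF A).toCE := by
  induction b with
  | tt | ff => exact .refl _
  | node c l' r' _ ihr =>
    rw [BF.takeR]
    split_ifs with hca
    · subst hca
      exact (Deriv.ax (Or.inr ⟨c, l.toCE, l'.toCE, r'.toCE, rfl, rfl⟩)).trans ihr
    · exact .refl _

lemma deriv_contract (b : BF A) : Deriv AxCr b.toCE b.contract.toCE := by
  induction b with
  | tt | ff => exact .refl _
  | node a l r ihl ihr =>
    exact ((Deriv.congr ihl (.refl _) ihr).trans (deriv_takeL a _ _)).trans (deriv_takeR a _ _)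

end Normalization

section Separation

variable {A : Type} [DecidableEq A]

lemma semC_toCE_node (a : A) (l r : BF A) (f : StateC A) :
    semC (BF.node a l r).toCE f =
      if f (.single a) then semC l.toCE (act a f) else semC r.toCE (act a f) := by
  rw [BF.toCE, semC_cond]
  rfl

lemma semC_node_actList {p : List A} (hp : p.IsChain (· ≠ ·)) {a : A}
    (ha : p.getLast? ≠ some a) (l r : BF A) {g f : StateC A} {β : Bool}
    (hf : EqOnPrefixes (p ++ [a]) f (patch p g fun _ => β)) :
    semC (BF.node a l r).toCE (actList p f) =
      semC (bif β then l else r).toCE (actList (p ++ [a]) f) := by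
  obtain ⟨s, hs, hfs⟩ := actList_single_of_getLast?_ne hp ha f
  have hβ : actList p f (.single a) = β := by
    rw [hfs, hf s (by rw [hs]), patch_of_not_prefix
      (not_prefix_of_append_singleton_prefix (by rw [hs]))]
  rw [semC_toCE_node, hβ, actList_append_singleton]
  cases β <;> rfl

lemma exists_snd_semC_node_actList {p : List A} (hp : p.IsChain (· ≠ ·)) {a : A}
    (ha : p.getLast? ≠ some a) (l r : BF A) (f : StateC A) (σ : CrStr A) :
    ∃ τ : CrStr A, (semC (BF.node a l r).toCE (actList p f)).2 σ = f τ ∧ p ++ [a] <+: τ.1 := by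
  obtain ⟨φ, hφ⟩ : ∃ φ : CrStr A → CrStr A,
      (semC (BF.node a l r).toCE (actList p f)).2 = act a (actList p f) ∘ φ := by
    rw [semC_toCE_node]
    split <;> exact exists_applyC_eq_comp _ _
  refine ⟨p.foldr acons (acons a (φ σ)), by rw [hφ]; rfl, ?_⟩
  rw [CrStr.val_foldr_acons hp (by rwa [CrStr.head?_acons]), List.prefix_append_right_inj,
    List.singleton_prefix_iff_head?_eq_some, CrStr.head?_acons]

lemma exists_ne_of_root_ne {p : List A} (hp : p.IsChain (· ≠ ·)) {a c : A}
    (ha : p.getLast? ≠ some a) (hc : p.getLast? ≠ some c) (hac : a ≠ c) (g : StateC A)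
    (l r l' r' : BF A) :
    ∃ f, EqOnPrefixes p f g ∧
      (semC (BF.node a l r).toCE (actList p f)).2 ≠
        (semC (BF.node c l' r').toCE (actList p f)).2 := by
  set f := patch p g fun s => decide (p ++ [a] <+: s.1)
  refine ⟨f, eqOnPrefixes_patch p g _, fun h => ?_⟩
  obtain ⟨τ, hτ, haτ⟩ := exists_snd_semC_node_actList hp ha l r f (.single a)
  obtain ⟨τ', hτ', hcτ'⟩ := exists_snd_semC_node_actList hp hc l' r' f (.single a)
  have hfτ : f τ = true :=
    (patch_of_not_prefix (not_prefix_of_append_singleton_prefix haτ)).trans (decide_eq_true haτ)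
  have hfτ' : f τ' = decide (p ++ [a] <+: τ'.1) :=
    patch_of_not_prefix (not_prefix_of_append_singleton_prefix hcτ')
  have hσ := congrFun h (.single a)
  rw [hτ, hτ', hfτ, hfτ'] at hσ
  have haτ' : p ++ [a] <+: τ'.1 := of_decide_eq_true hσ.symm
  have := (List.prefix_of_prefix_length_le haτ' hcτ' (by simp)).eq_of_length (by simp)
  exact hac (by simpa using this)

lemma exists_ne_of_leaf_node [Nontrivial A] {p : List A} (hp : p.IsChain (· ≠ ·)) {c : A}
    (hc : p.getLast? ≠ some c) (g : StateC A) (l r : BF A) :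
    ∃ f, EqOnPrefixes p f g ∧ (semC (BF.node c l r).toCE (actList p f)).2 ≠ actList p f := by
  rcases p.eq_nil_or_concat' with rfl | ⟨q, e, rfl⟩
  · obtain ⟨d, hd⟩ := exists_ne c
    set f := patch [] g fun s => decide ([c] <+: s.1)
    refine ⟨f, eqOnPrefixes_patch [] g _, fun h => ?_⟩
    obtain ⟨τ, hτ, hcτ⟩ := exists_snd_semC_node_actList hp hc l r f (.single d)
    have hfτ : f τ = true := (patch_of_not_prefix (not_prefix_of_append_singleton_prefix hcτ)).trans
      (decide_eq_true hcτ)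
    have hfd : actList [] f (.single d) = false := by
      change f (.single d) = false
      simp [f, patch, CrStr.single, hd.symm]
    have hσ := congrFun h (.single d)
    rw [hτ, hfτ, hfd] at hσ
    exact Bool.noConfusion hσ
  · have he : q.getLast? ≠ some e := fun h =>
      (List.isChain_append.mp hp).2.2 e h e rfl rfl
    obtain ⟨s, hs, -⟩ := actList_single_of_getLast?_ne hp.left_of_append he g
    set f := patch (q ++ [e]) g fun _ => !g s
    refine ⟨f, eqOnPrefixes_patch _ g _, fun h => ?_⟩
    obtain ⟨τ, hτ, hcτ⟩ := exists_snd_semC_node_actList hp hc l r f (.single e)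
    obtain ⟨s', hs', hfs'⟩ := actList_single_of_getLast?_ne hp.left_of_append he f
    have hfτ : f τ = !g s := patch_of_not_prefix (not_prefix_of_append_singleton_prefix hcτ)
    have hfe : actList (q ++ [e]) f (.single e) = g s := by
      rw [actList_append_singleton, act_single, hfs', Subtype.ext (hs'.trans hs.symm)]
      exact eqOnPrefixes_patch _ g _ s (by rw [hs])
    have hσ := congrFun h (.single e)
    rw [hτ, hfτ, hfe] at hσ
    exact Bool.not_ne_self _ hσ

end Separation

namespace BF

variable {A : Type} [DecidableEq A] [Nontrivial A]

/-- The induction descends along a branch `p`; a state follows that branch as soon as it has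
prescribed values at the prefixes of `p`, the strings queried on the way down. -/
theorem eq_of_semC_actList_eq {p : List A} (hp : p.IsChain (· ≠ ·)) (g : StateC A)
    {b b' : BF A} (hb : b.ContrAfter p.getLast?) (hb' : b'.ContrAfter p.getLast?)
    (h : ∀ f, EqOnPrefixes p f g → semC b.toCE (actList p f) = semC b'.toCE (actList p f)) :
    b = b' := by
  induction b generalizing p g b' with
  | tt | ff =>
    cases b' with
    | tt | ff => first | rfl | simpa [toCE] using congrArg Prod.fst (h g fun _ _ => rfl)
    | node c l r =>
      obtain ⟨f, hf, hne⟩ := exists_ne_of_leaf_node hp hb'.1 g l r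
      exact absurd (congrArg Prod.snd (h f hf)).symm hne
  | node a l r ihl ihr =>
    cases b' with
    | tt | ff =>
      obtain ⟨f, hf, hne⟩ := exists_ne_of_leaf_node hp hb.1 g l r
      exact absurd (congrArg Prod.snd (h f hf)) hne
    | node c l' r' =>
      obtain rfl | hac := eq_or_ne a c
      · have hpa : (p ++ [a]).IsChain (· ≠ ·) :=
          hp.append (.singleton a) fun x hx y hy hxy => hb.1 (by simp_all)
        have hlast : (p ++ [a]).getLast? = some a := List.getLast?_concat
        have hchild (β : Bool) (f : StateC A)
            (hf : EqOnPrefixes (p ++ [a]) f (patch p g fun _ => β)) :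
            semC (bif β then l else r).toCE (actList (p ++ [a]) f) =
              semC (bif β then l' else r').toCE (actList (p ++ [a]) f) := by
          rw [← semC_node_actList hp hb.1 l r hf, ← semC_node_actList hp hb.1 l' r' hf,
            h f hf.of_append_patch]
        rw [ihl hpa _ (hlast ▸ hb.2.1) (hlast ▸ hb'.2.1) (hchild true),
          ihr hpa _ (hlast ▸ hb.2.2) (hlast ▸ hb'.2.2) (hchild false)]
        rfl
      · obtain ⟨f, hf, hne⟩ := exists_ne_of_root_ne hp hb.1 hb'.1 hac g l r l' r'
        exact absurd (congrArg Prod.snd (h f hf)) hne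

theorem eq_of_semC_eq {b b' : BF A} (hb : b.ContrAfter none) (hb' : b'.ContrAfter none)
    (h : semC b.toCE = semC b'.toCE) : b = b' :=
  eq_of_semC_actList_eq .nil (fun _ => true) hb hb' fun f _ => congrFun h f

end BF

/-- Soundness and completeness of CP_cr with respect to states on A^cr. -/
theorem cpcr_sound_complete (A : Type) [DecidableEq A] (hA : ∃ a b : A, a ≠ b)
    (t t' : CE A) :
    Deriv AxCr t t' ↔
      ∀ f : StateC A, replyC t f = replyC t' f ∧ applyC t f = applyC t' f := by
  have : Nontrivial A := ⟨hA⟩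
  have hnf (s : CE A) : Deriv AxCr s s.toBF.contract.toCE :=
    (deriv_toBF s).trans (deriv_contract _)
  have hsem : (∀ f : StateC A, replyC t f = replyC t' f ∧ applyC t f = applyC t' f) ↔
      semC t = semC t' := by
    simp only [funext_iff, semC, Prod.ext_iff]
  rw [hsem]
  refine ⟨semC_eq_of_deriv, fun h => ?_⟩
  have hcontr : t.toBF.contract = t'.toBF.contract :=
    BF.eq_of_semC_eq (BF.contrAfter_contract _) (BF.contrAfter_contract _) <| by
      rw [← semC_eq_of_deriv (hnf t), ← semC_eq_of_deriv (hnf t'), h]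
  exact (hnf t).trans (hcontr ▸ (hnf t').symm)
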